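/- arXiv:1009.1723 — 2 statements merged into one kernel-verified Lean document; each statement's English description precedes it below -/
import Mathlib

section
/- Let r > 0, λ > 0, {v₀,v₁,w} a positive oriented orthonormal system, and α(t) = √(1+r²) w + r cos(λt/r) v₁ + r sin(λt/r) v₀. Then for every t ∈ ℝ: ⟨α̇(t), α̇(t)⟩ₘ = λ², ⟨α(t) ×ₘ α̇(t), α(t) ×ₘ α̇(t)⟩ₘ = λ², ⟨α̇(t), α(t) ×ₘ α̇(t)⟩ₘ = 0, ⟨α̇(t), α(t)⟩ₘ = 0, and ⟨α(t) ×ₘ α̇(t), α(t)⟩ₘ = 0; in particular {α̇(t), α(t) ×ₘ α̇(t)} is a Minkowski-orthogonal frame of the tangent plane to ℍ at α(t). -/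
noncomputable section

open Real

/-- The Minkowski inner product on ℝ³. -/
def mink (v w : Fin 3 → ℝ) : ℝ := v 0 * w 0 + v 1 * w 1 - v 2 * w 2

/-- The twisted cross product on ℝ³. -/
def mcross (v w : Fin 3 → ℝ) : Fin 3 → ℝ :=
  ![v 2 * w 1 - v 1 * w 2, v 0 * w 2 - v 2 * w 0, v 0 * w 1 - v 1 * w 0]

/-- A positive oriented orthonormal system with respect to the Minkowski metric. -/
def posOrth (v₀ v₁ w : Fin 3 → ℝ) : Prop :=
  mink v₀ v₁ = 0 ∧ mink v₀ w = 0 ∧ mink v₁ w = 0 ∧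
  mink v₀ v₀ = 1 ∧ mink v₁ v₁ = 1 ∧ mink w w = -1 ∧
  mcross v₀ v₁ = w

/-- Membership in the hyperbolic plane ℍ ⊂ ℝ³. -/
def inH (x : Fin 3 → ℝ) : Prop := x 2 ^ 2 - x 0 ^ 2 - x 1 ^ 2 = 1 ∧ 0 < x 2

/-!
In the basis `(w, v₁, v₀)` the Minkowski form is `diag(-1, 1, 1)`, so `⟨α, α⟩ₘ = -1`,
`⟨α̇, α̇⟩ₘ = λ²` and `⟨α̇, α⟩ₘ = 0` are trigonometric identities. The remaining claims follow from
the Lagrange identity `⟨u ×ₘ v, u ×ₘ v⟩ₘ = ⟨u, v⟩ₘ² - ⟨u, u⟩ₘ⟨v, v⟩ₘ` and the orthogonality of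
`u ×ₘ v` to both factors.
-/

section MinkowskiAlgebra

variable (u v x : Fin 3 → ℝ) (a : ℝ)

lemma mink_comm : mink u v = mink v u := by
  simp only [mink]; ring

lemma mink_add_left : mink (u + v) x = mink u x + mink v x := by
  simp only [mink, Pi.add_apply]; ring

lemma mink_add_right : mink x (u + v) = mink x u + mink x v := by
  simp only [mink, Pi.add_apply]; ring

lemma mink_smul_left : mink (a • u) v = a * mink u v := by
  simp only [mink, Pi.smul_apply, smul_eq_mul]; ring

lemma mink_smul_right : mink u (a • v) = a * mink u v := by
  simp only [mink, Pi.smul_apply, smul_eq_mul]; ring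

lemma mink_mcross_mcross :
    mink (mcross u v) (mcross u v) = mink u v ^ 2 - mink u u * mink v v := by
  simp only [mink, mcross, Matrix.cons_val_zero, Matrix.cons_val_one, Matrix.cons_val_two,
    Matrix.head_cons, Matrix.tail_cons]
  ring

lemma mink_mcross_left : mink (mcross u v) u = 0 := by
  simp only [mink, mcross, Matrix.cons_val_zero, Matrix.cons_val_one, Matrix.cons_val_two,
    Matrix.head_cons, Matrix.tail_cons]
  ring

lemma mink_mcross_right : mink (mcross u v) v = 0 := by
  simp only [mink, mcross, Matrix.cons_val_zero, Matrix.cons_val_one, Matrix.cons_val_two,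
    Matrix.head_cons, Matrix.tail_cons]
  ring

end MinkowskiAlgebra

lemma mink_mcross_of_mem_tangent {x v : Fin 3 → ℝ} (hx : mink x x = -1) (hvx : mink v x = 0) :
    mink (mcross x v) (mcross x v) = mink v v := by
  rw [mink_mcross_mcross, mink_comm x v, hvx, hx]
  ring

lemma posOrth.mink_eq {v₀ v₁ w : Fin 3 → ℝ} (h : posOrth v₀ v₁ w) (a b c a' b' c' : ℝ) :
    mink (a • w + b • v₁ + c • v₀) (a' • w + b' • v₁ + c' • v₀) = -(a * a') + b * b' + c * c' := by
  obtain ⟨h01, h0w, h1w, h00, h11, hww, -⟩ := h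
  have h10 : mink v₁ v₀ = 0 := by rw [mink_comm, h01]
  have hw0 : mink w v₀ = 0 := by rw [mink_comm, h0w]
  have hw1 : mink w v₁ = 0 := by rw [mink_comm, h1w]
  simp only [mink_add_left, mink_add_right, mink_smul_left, mink_smul_right,
    h01, h10, h0w, hw0, h1w, hw1, h00, h11, hww]
  ring

lemma hasDerivAt_circle {E : Type*} [NormedAddCommGroup E] [NormedSpace ℝ E]
    {r : ℝ} (hr : r ≠ 0) (lam a : ℝ) (w v₁ v₀ : E) (t : ℝ) :
    HasDerivAt (fun t => a • w + (r * cos (lam * t / r)) • v₁ + (r * sin (lam * t / r)) • v₀)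
      ((0 : ℝ) • w + (-(lam * sin (lam * t / r))) • v₁ + (lam * cos (lam * t / r)) • v₀) t := by
  have hθ : HasDerivAt (fun t : ℝ => lam * t / r) (lam / r) t := by
    simpa using ((hasDerivAt_id t).const_mul lam).div_const r
  have hcos : HasDerivAt (fun t => r * cos (lam * t / r)) (-(lam * sin (lam * t / r))) t := by
    refine (((hasDerivAt_cos _).comp t hθ).const_mul r).congr_deriv ?_
    field_simp
  have hsin : HasDerivAt (fun t => r * sin (lam * t / r)) (lam * cos (lam * t / r)) t := by
    refine (((hasDerivAt_sin _).comp t hθ).const_mul r).congr_deriv ?_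
    field_simp
  exact (((hasDerivAt_const t a).smul_const w).add (hcos.smul_const v₁)).add (hsin.smul_const v₀)

theorem stmt_6_general (r lam : ℝ) (hr : 0 < r) (v₀ v₁ w : Fin 3 → ℝ)
    (hsys : posOrth v₀ v₁ w) :
    let α : ℝ → Fin 3 → ℝ := fun t =>
      Real.sqrt (1 + r ^ 2) • w + (r * Real.cos (lam * t / r)) • v₁ +
        (r * Real.sin (lam * t / r)) • v₀
    ∀ t : ℝ,
      mink (deriv α t) (deriv α t) = lam ^ 2 ∧
      mink (mcross (α t) (deriv α t)) (mcross (α t) (deriv α t)) = lam ^ 2 ∧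
      mink (deriv α t) (mcross (α t) (deriv α t)) = 0 ∧
      mink (deriv α t) (α t) = 0 ∧
      mink (mcross (α t) (deriv α t)) (α t) = 0 := by
  intro α t
  have hα' := (hasDerivAt_circle hr.ne' lam (√(1 + r ^ 2)) w v₁ v₀ t).deriv
  have hq : √(1 + r ^ 2) ^ 2 = 1 + r ^ 2 := sq_sqrt (by positivity)
  have hsc := sin_sq_add_cos_sq (lam * t / r)
  have hαα : mink (α t) (α t) = -1 := by
    rw [hsys.mink_eq]; linear_combination r ^ 2 * hsc - hq
  have hα'α' : mink (deriv α t) (deriv α t) = lam ^ 2 := by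
    rw [hα', hsys.mink_eq]; linear_combination lam ^ 2 * hsc
  have hα'α : mink (deriv α t) (α t) = 0 := by
    rw [hα', hsys.mink_eq]; ring
  exact ⟨hα'α', by rw [mink_mcross_of_mem_tangent hαα hα'α, hα'α'],
    by rw [mink_comm, mink_mcross_right], hα'α, mink_mcross_left _ _⟩

/-- {α̇, α ×ₘ α̇} is a Minkowski-orthogonal frame of the tangent plane
to ℍ along α, both vectors having squared length λ². -/
theorem stmt_6 (r lam : ℝ) (hr : 0 < r) (hlam : 0 < lam) (v₀ v₁ w : Fin 3 → ℝ)
    (hsys : posOrth v₀ v₁ w) :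
    let α : ℝ → Fin 3 → ℝ := fun t =>
      Real.sqrt (1 + r ^ 2) • w + (r * Real.cos (lam * t / r)) • v₁ +
        (r * Real.sin (lam * t / r)) • v₀
    ∀ t : ℝ,
      mink (deriv α t) (deriv α t) = lam ^ 2 ∧
      mink (mcross (α t) (deriv α t)) (mcross (α t) (deriv α t)) = lam ^ 2 ∧
      mink (deriv α t) (mcross (α t) (deriv α t)) = 0 ∧
      mink (deriv α t) (α t) = 0 ∧
      mink (mcross (α t) (deriv α t)) (α t) = 0 :=
  stmt_6_general r lam hr v₀ v₁ w hsys
end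
end

section
/- Let r > 0, {v₀,v₁,w} a positive oriented orthonormal system, and α(t) = √(1+r²) w + r cos(2πt) v₁ + r sin(2πt) v₀. Let λ₁, λ₂ : ℝ → ℝ be C². Then for all t: (−D_t² + 1)(λ₁ α̇ + λ₂ (α ×ₘ α̇))(t) = (−λ₁''(t) + 4π√(1+r²) λ₂'(t) + (4π²(1+r²)+1) λ₁(t)) α̇(t) + (−λ₂''(t) − 4π√(1+r²) λ₁'(t) + (4π²(1+r²)+1) λ₂(t)) (α(t) ×ₘ α̇(t)). -/
noncomputable section

open Real

/-- The covariant derivative on ℍ of a tangent vector field `V` along a curve `γ` in ℍ: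
`D_t V(t) = V̇(t) + ⟨V̇(t), γ(t)⟩ₘ γ(t)`. -/
def covDt (γ V : ℝ → Fin 3 → ℝ) : ℝ → Fin 3 → ℝ :=
  fun t => deriv V t + mink (deriv V t) (γ t) • γ t

/-!
Along the circle `α`, the tangent fields `E₁ = α̇` and `E₂ = α ×ₘ α̇` satisfy the Frenet
equations `D_t E₁ = κ E₂`, `D_t E₂ = -κ E₁` with the constant geodesic curvature
`κ = 2π√(1+r²)`. Since `D_t` obeys the Leibniz rule on tangent fields,
`D_t (λ₁ E₁ + λ₂ E₂) = (λ₁' - κ λ₂) E₁ + (λ₂' + κ λ₁) E₂`; applying this twice and using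
`κ² = 4π²(1+r²)` gives the formula. The Frenet equations are checked in the coordinates of the
frame `(v₀, v₁, w)`, in which `⟨·,·⟩ₘ` and `×ₘ` have their standard expressions.
-/
section Algebra

lemma mink_comm_s14 (a b : Fin 3 → ℝ) : mink a b = mink b a := by
  simp only [mink]; ring

lemma mink_add_left_s14 (a b c : Fin 3 → ℝ) : mink (a + b) c = mink a c + mink b c := by
  simp only [mink, Pi.add_apply]; ring

lemma mink_add_right_s14 (a b c : Fin 3 → ℝ) : mink a (b + c) = mink a b + mink a c := by
  simp only [mink, Pi.add_apply]; ring

lemma mink_smul_left_s14 (k : ℝ) (a b : Fin 3 → ℝ) : mink (k • a) b = k * mink a b := by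
  simp only [mink, Pi.smul_apply, smul_eq_mul]; ring

lemma mink_smul_right_s14 (k : ℝ) (a b : Fin 3 → ℝ) : mink a (k • b) = k * mink a b := by
  simp only [mink, Pi.smul_apply, smul_eq_mul]; ring

lemma mink_mcross_self_left (a b : Fin 3 → ℝ) : mink (mcross a b) a = 0 := by
  simp [mink, mcross]; ring

lemma mcross_anticomm (a b : Fin 3 → ℝ) : mcross b a = -mcross a b := by
  funext i; fin_cases i <;> simp [mcross] <;> ring

lemma mcross_self (a : Fin 3 → ℝ) : mcross a a = 0 := by
  funext i; fin_cases i <;> simp [mcross] <;> ring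

lemma mcross_add_left (a b c : Fin 3 → ℝ) : mcross (a + b) c = mcross a c + mcross b c := by
  funext i; fin_cases i <;> simp [mcross] <;> ring

lemma mcross_add_right (a b c : Fin 3 → ℝ) : mcross a (b + c) = mcross a b + mcross a c := by
  funext i; fin_cases i <;> simp [mcross] <;> ring

lemma mcross_smul_left (k : ℝ) (a b : Fin 3 → ℝ) : mcross (k • a) b = k • mcross a b := by
  funext i; fin_cases i <;> simp [mcross] <;> ring

lemma mcross_smul_right (k : ℝ) (a b : Fin 3 → ℝ) : mcross a (k • b) = k • mcross a b := by
  funext i; fin_cases i <;> simp [mcross] <;> ring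

lemma mcross_neg_right (a b : Fin 3 → ℝ) : mcross a (-b) = -mcross a b := by
  funext i; fin_cases i <;> simp [mcross] <;> ring

lemma mcross_mcross_self_left (a b : Fin 3 → ℝ) :
    mcross a (mcross a b) = mink a a • b - mink a b • a := by
  funext i; fin_cases i <;> simp [mcross, mink] <;> ring

variable {v₀ v₁ w : Fin 3 → ℝ}

lemma posOrth.mcross_v₀_w (h : posOrth v₀ v₁ w) : mcross v₀ w = v₁ := by
  obtain ⟨h01, -, -, h00, -, -, rfl⟩ := h
  rw [mcross_mcross_self_left, h00, h01, one_smul, zero_smul, sub_zero]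

lemma posOrth.mcross_v₁_w (h : posOrth v₀ v₁ w) : mcross v₁ w = -v₀ := by
  obtain ⟨h01, -, -, -, h11, -, rfl⟩ := h
  rw [mcross_anticomm v₁ v₀, mcross_neg_right, mcross_mcross_self_left, h11, mink_comm_s14, h01,
    one_smul, zero_smul, sub_zero]

def frameVec (v₀ v₁ w : Fin 3 → ℝ) (a b c : ℝ) : Fin 3 → ℝ := a • v₀ + b • v₁ + c • w

lemma posOrth.mink_frameVec (h : posOrth v₀ v₁ w) (a₀ a₁ a₂ b₀ b₁ b₂ : ℝ) :
    mink (frameVec v₀ v₁ w a₀ a₁ a₂) (frameVec v₀ v₁ w b₀ b₁ b₂) = a₀ * b₀ + a₁ * b₁ - a₂ * b₂ := by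
  obtain ⟨h01, h0w, h1w, h00, h11, hww, -⟩ := h
  simp only [frameVec, mink_add_left_s14, mink_add_right_s14, mink_smul_left_s14, mink_smul_right_s14,
    h01, h0w, h1w, h00, h11, hww, mink_comm_s14 v₁ v₀, mink_comm_s14 w v₀, mink_comm_s14 w v₁]
  ring

lemma posOrth.mcross_frameVec (h : posOrth v₀ v₁ w) (a₀ a₁ a₂ b₀ b₁ b₂ : ℝ) :
    mcross (frameVec v₀ v₁ w a₀ a₁ a₂) (frameVec v₀ v₁ w b₀ b₁ b₂) =
      frameVec v₀ v₁ w (a₂ * b₁ - a₁ * b₂) (a₀ * b₂ - a₂ * b₀) (a₀ * b₁ - a₁ * b₀) := by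
  have h01 : mcross v₀ v₁ = w := h.2.2.2.2.2.2
  have h0w := h.mcross_v₀_w
  have h1w := h.mcross_v₁_w
  simp only [frameVec, mcross_add_left, mcross_add_right, mcross_smul_left, mcross_smul_right,
    mcross_self, mcross_anticomm v₀ v₁, mcross_anticomm v₀ w, mcross_anticomm v₁ w,
    h01, h0w, h1w, smul_zero, neg_neg]
  module

lemma HasDerivAt.frameVec {a b c : ℝ → ℝ} {a' b' c' t : ℝ} (ha : HasDerivAt a a' t)
    (hb : HasDerivAt b b' t) (hc : HasDerivAt c c' t) :
    HasDerivAt (fun s => _root_.frameVec v₀ v₁ w (a s) (b s) (c s))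
      (_root_.frameVec v₀ v₁ w a' b' c') t :=
  ((ha.smul_const v₀).add (hb.smul_const v₁)).add (hc.smul_const w)

end Algebra

section CovariantDerivative

variable {γ E₁ E₂ : ℝ → Fin 3 → ℝ}

lemma covDt_add {V W : ℝ → Fin 3 → ℝ} {t : ℝ} (hV : DifferentiableAt ℝ V t)
    (hW : DifferentiableAt ℝ W t) :
    covDt γ (fun s => V s + W s) t = covDt γ V t + covDt γ W t := by
  simp only [covDt]
  rw [deriv_fun_add hV hW, mink_add_left_s14, add_smul]
  abel

lemma covDt_smul {f : ℝ → ℝ} {E : ℝ → Fin 3 → ℝ} {t : ℝ} (hf : DifferentiableAt ℝ f t)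
    (hE : DifferentiableAt ℝ E t) (hEγ : mink (E t) (γ t) = 0) :
    covDt γ (fun s => f s • E s) t = deriv f t • E t + f t • covDt γ E t := by
  simp only [covDt]
  rw [deriv_fun_smul hf hE, mink_add_left_s14, mink_smul_left_s14, mink_smul_left_s14, hEγ]
  module

structure IsFrenetFrame (γ E₁ E₂ : ℝ → Fin 3 → ℝ) (κ : ℝ) : Prop where
  differentiable_fst : Differentiable ℝ E₁
  differentiable_snd : Differentiable ℝ E₂
  mink_fst : ∀ t, mink (E₁ t) (γ t) = 0
  mink_snd : ∀ t, mink (E₂ t) (γ t) = 0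
  covDt_fst : ∀ t, covDt γ E₁ t = κ • E₂ t
  covDt_snd : ∀ t, covDt γ E₂ t = -κ • E₁ t

namespace IsFrenetFrame

variable {κ : ℝ} {f g : ℝ → ℝ}

theorem covDt_smul_add_smul (hF : IsFrenetFrame γ E₁ E₂ κ) (hf : Differentiable ℝ f)
    (hg : Differentiable ℝ g) :
    covDt γ (fun t => f t • E₁ t + g t • E₂ t) =
      fun t => (deriv f t - κ * g t) • E₁ t + (deriv g t + κ * f t) • E₂ t := by
  funext t
  rw [covDt_add (V := fun s => f s • E₁ s) (W := fun s => g s • E₂ s)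
      ((hf t).smul (hF.differentiable_fst t)) ((hg t).smul (hF.differentiable_snd t)),
    covDt_smul (hf t) (hF.differentiable_fst t) (hF.mink_fst t),
    covDt_smul (hg t) (hF.differentiable_snd t) (hF.mink_snd t), hF.covDt_fst, hF.covDt_snd]
  module

theorem covDt_covDt_smul_add_smul (hF : IsFrenetFrame γ E₁ E₂ κ) (hf : ContDiff ℝ 2 f)
    (hg : ContDiff ℝ 2 g) :
    covDt γ (covDt γ fun t => f t • E₁ t + g t • E₂ t) =
      fun t => (deriv (deriv f) t - 2 * κ * deriv g t - κ ^ 2 * f t) • E₁ t +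
        (deriv (deriv g) t + 2 * κ * deriv f t - κ ^ 2 * g t) • E₂ t := by
  have hf₁ := hf.differentiable two_ne_zero
  have hg₁ := hg.differentiable two_ne_zero
  have hf₂ := hf.differentiable_deriv_two
  have hg₂ := hg.differentiable_deriv_two
  rw [hF.covDt_smul_add_smul hf₁ hg₁,
    hF.covDt_smul_add_smul (f := fun t => deriv f t - κ * g t) (g := fun t => deriv g t + κ * f t)
      (hf₂.sub (hg₁.const_mul κ)) (hg₂.add (hf₁.const_mul κ))]
  funext t
  rw [deriv_fun_sub (hf₂ t) ((hg₁ t).const_mul κ), deriv_fun_add (hg₂ t) ((hf₁ t).const_mul κ),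
    deriv_const_mul κ (hg₁ t), deriv_const_mul κ (hf₁ t)]
  match_scalars <;> ring

end IsFrenetFrame

end CovariantDerivative

section Circle

lemma hasDerivAt_const_mul_sin (c ω t : ℝ) :
    HasDerivAt (fun s => c * sin (ω * s)) (c * ω * cos (ω * t)) t :=
  (((hasDerivAt_id' t).const_mul ω).sin.const_mul c).congr_deriv (by ring)

lemma hasDerivAt_const_mul_cos (c ω t : ℝ) :
    HasDerivAt (fun s => c * cos (ω * s)) (-(c * ω * sin (ω * t))) t :=
  (((hasDerivAt_id' t).const_mul ω).cos.const_mul c).congr_deriv (by ring)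

variable {v₀ v₁ w : Fin 3 → ℝ} (r ω : ℝ)

def hypCircle (r ω : ℝ) (v₀ v₁ w : Fin 3 → ℝ) (t : ℝ) : Fin 3 → ℝ :=
  √(1 + r ^ 2) • w + (r * cos (ω * t)) • v₁ + (r * sin (ω * t)) • v₀

lemma hypCircle_eq_frameVec (t : ℝ) :
    hypCircle r ω v₀ v₁ w t =
      frameVec v₀ v₁ w (r * sin (ω * t)) (r * cos (ω * t)) √(1 + r ^ 2) := by
  simp only [hypCircle, frameVec]; abel

lemma deriv_hypCircle :
    deriv (hypCircle r ω v₀ v₁ w) =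
      fun t => frameVec v₀ v₁ w (r * ω * cos (ω * t)) (-(r * ω * sin (ω * t))) 0 := by
  funext t
  rw [funext (hypCircle_eq_frameVec r ω)]
  exact ((hasDerivAt_const_mul_sin r ω t).frameVec (hasDerivAt_const_mul_cos r ω t)
    (hasDerivAt_const t _)).deriv

lemma posOrth.mcross_hypCircle_deriv (h : posOrth v₀ v₁ w) (t : ℝ) :
    mcross (hypCircle r ω v₀ v₁ w t) (deriv (hypCircle r ω v₀ v₁ w) t) =
      frameVec v₀ v₁ w (-(r * ω * √(1 + r ^ 2) * sin (ω * t)))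
        (-(r * ω * √(1 + r ^ 2) * cos (ω * t))) (-(r ^ 2 * ω)) := by
  rw [deriv_hypCircle, hypCircle_eq_frameVec, h.mcross_frameVec]
  congr 1
  · ring
  · ring
  · linear_combination (-(r ^ 2 * ω)) * sin_sq_add_cos_sq (ω * t)

theorem posOrth.isFrenetFrame_hypCircle (h : posOrth v₀ v₁ w) :
    IsFrenetFrame (hypCircle r ω v₀ v₁ w) (deriv (hypCircle r ω v₀ v₁ w))
      (fun t => mcross (hypCircle r ω v₀ v₁ w t) (deriv (hypCircle r ω v₀ v₁ w) t))
      (ω * √(1 + r ^ 2)) := by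
  have hs : √(1 + r ^ 2) ^ 2 = 1 + r ^ 2 := sq_sqrt (by positivity)
  have hE₁ (t : ℝ) : HasDerivAt (deriv (hypCircle r ω v₀ v₁ w))
      (frameVec v₀ v₁ w (-(r * ω * ω * sin (ω * t))) (-(r * ω * ω * cos (ω * t))) 0) t := by
    rw [deriv_hypCircle]
    exact (hasDerivAt_const_mul_cos _ ω t).frameVec (hasDerivAt_const_mul_sin _ ω t).neg
      (hasDerivAt_const t _)
  have hE₂ (t : ℝ) : HasDerivAt
      (fun t => mcross (hypCircle r ω v₀ v₁ w t) (deriv (hypCircle r ω v₀ v₁ w) t))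
      (frameVec v₀ v₁ w (-(r * ω * √(1 + r ^ 2) * ω * cos (ω * t)))
        (r * ω * √(1 + r ^ 2) * ω * sin (ω * t)) 0) t := by
    rw [funext (h.mcross_hypCircle_deriv r ω)]
    exact ((hasDerivAt_const_mul_sin (r * ω * √(1 + r ^ 2)) ω t).neg.frameVec
      (hasDerivAt_const_mul_cos (r * ω * √(1 + r ^ 2)) ω t).neg
      (hasDerivAt_const t (-(r ^ 2 * ω)))).congr_deriv (by congr 1; ring)
  refine ⟨fun t => (hE₁ t).differentiableAt, fun t => (hE₂ t).differentiableAt,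
    fun t => ?_, fun t => mink_mcross_self_left _ _, fun t => ?_, fun t => ?_⟩
  · rw [deriv_hypCircle, hypCircle_eq_frameVec, h.mink_frameVec]
    ring
  · have hE₁'_normal : mink (deriv (deriv (hypCircle r ω v₀ v₁ w)) t) (hypCircle r ω v₀ v₁ w t) =
        -(r * ω) ^ 2 := by
      rw [(hE₁ t).deriv, hypCircle_eq_frameVec, h.mink_frameVec]
      linear_combination (-(r * ω) ^ 2) * sin_sq_add_cos_sq (ω * t)
    rw [covDt, hE₁'_normal, (hE₁ t).deriv, h.mcross_hypCircle_deriv, hypCircle_eq_frameVec]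
    simp only [frameVec]
    match_scalars
    · linear_combination (r * ω ^ 2 * sin (ω * t)) * hs
    · linear_combination (r * ω ^ 2 * cos (ω * t)) * hs
    · ring
  · have hE₂'_normal : mink (deriv (fun t => mcross (hypCircle r ω v₀ v₁ w t)
        (deriv (hypCircle r ω v₀ v₁ w) t)) t) (hypCircle r ω v₀ v₁ w t) = 0 := by
      rw [(hE₂ t).deriv, hypCircle_eq_frameVec, h.mink_frameVec]
      ring
    rw [covDt, hE₂'_normal, (hE₂ t).deriv, deriv_hypCircle]
    simp only [frameVec]
    match_scalars <;> ring

end Circle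

theorem stmt_14_general (r : ℝ) (v₀ v₁ w : Fin 3 → ℝ) (hsys : posOrth v₀ v₁ w)
    (lam₁ lam₂ : ℝ → ℝ) (h₁ : ContDiff ℝ 2 lam₁) (h₂ : ContDiff ℝ 2 lam₂) :
    let α : ℝ → Fin 3 → ℝ := fun t =>
      Real.sqrt (1 + r ^ 2) • w + (r * Real.cos (2 * Real.pi * t)) • v₁ +
        (r * Real.sin (2 * Real.pi * t)) • v₀
    let V : ℝ → Fin 3 → ℝ := fun t => lam₁ t • deriv α t + lam₂ t • mcross (α t) (deriv α t)
    ∀ t : ℝ,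
      -(covDt α (covDt α V) t) + V t =
        (-(deriv (deriv lam₁) t) + 4 * Real.pi * Real.sqrt (1 + r ^ 2) * deriv lam₂ t +
            (4 * Real.pi ^ 2 * (1 + r ^ 2) + 1) * lam₁ t) • deriv α t +
          (-(deriv (deriv lam₂) t) - 4 * Real.pi * Real.sqrt (1 + r ^ 2) * deriv lam₁ t +
            (4 * Real.pi ^ 2 * (1 + r ^ 2) + 1) * lam₂ t) • mcross (α t) (deriv α t) := by
  intro α V t
  have hF : IsFrenetFrame α (deriv α) (fun t => mcross (α t) (deriv α t))
      (2 * π * √(1 + r ^ 2)) :=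
    hsys.isFrenetFrame_hypCircle r (2 * π)
  have hs : √(1 + r ^ 2) ^ 2 = 1 + r ^ 2 := sq_sqrt (by positivity)
  rw [hF.covDt_covDt_smul_add_smul h₁ h₂]
  match_scalars
  · linear_combination (4 * π ^ 2 * lam₁ t) * hs
  · linear_combination (4 * π ^ 2 * lam₂ t) * hs

/-- the operator (−D_t² + 1) in the moving frame {α̇, α ×ₘ α̇}. -/
theorem stmt_14 (r : ℝ) (hr : 0 < r) (v₀ v₁ w : Fin 3 → ℝ) (hsys : posOrth v₀ v₁ w)
    (lam₁ lam₂ : ℝ → ℝ) (h₁ : ContDiff ℝ 2 lam₁) (h₂ : ContDiff ℝ 2 lam₂) :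
    let α : ℝ → Fin 3 → ℝ := fun t =>
      Real.sqrt (1 + r ^ 2) • w + (r * Real.cos (2 * Real.pi * t)) • v₁ +
        (r * Real.sin (2 * Real.pi * t)) • v₀
    let V : ℝ → Fin 3 → ℝ := fun t => lam₁ t • deriv α t + lam₂ t • mcross (α t) (deriv α t)
    ∀ t : ℝ,
      -(covDt α (covDt α V) t) + V t =
        (-(deriv (deriv lam₁) t) + 4 * Real.pi * Real.sqrt (1 + r ^ 2) * deriv lam₂ t +
            (4 * Real.pi ^ 2 * (1 + r ^ 2) + 1) * lam₁ t) • deriv α t +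
          (-(deriv (deriv lam₂) t) - 4 * Real.pi * Real.sqrt (1 + r ^ 2) * deriv lam₁ t +
            (4 * Real.pi ^ 2 * (1 + r ^ 2) + 1) * lam₂ t) • mcross (α t) (deriv α t) :=
  stmt_14_general r v₀ v₁ w hsys lam₁ lam₂ h₁ h₂
end
end
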